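/- arXiv:2207.10922 — 3 statements merged into one kernel-verified Lean document; each statement's English description precedes it below -/
import Mathlib

section
/- For positive integers m, k and a nonnegative integer ℓ, the function P_{m,k,ℓ}(x₁,…,x_m) := (x₁⋯x_m)^{k+ℓ} · (∂_{x₁} + ⋯ + ∂_{x_m})^ℓ (x₁⋯x_m)^{−k} satisfies, on the domain where all xⱼ ≠ 0, the identity P_{m,k,ℓ}(x)/(x₁⋯x_m)^{ℓ} = (−1)^ℓ ℓ! Σ_{r∈ℕ^m, r₁+⋯+r_m=ℓ} ∏_{j=1}^m ( k^{(r_j)} / r_j! ) · x_j^{−r_j}, where k^{(n)} := k(k+1)⋯(k+n−1). -/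
open Finset

/-- The operator `∂_{x₁} + ⋯ + ∂_{x_m}` on functions `(Fin m → ℝ) → ℝ`. -/
noncomputable def sumPartialDeriv (m : ℕ) (f : (Fin m → ℝ) → ℝ) : (Fin m → ℝ) → ℝ :=
  fun x => ∑ j : Fin m, fderiv ℝ f x (Pi.single j 1)

/-!
On the domain where all `yᵢ ≠ 0`, the `n`-th iterate is `(-1)^n n!` times the Laurent polynomial
`∑_{|r| = n} w(r) ∏ᵢ yᵢ^{-(k + rᵢ)}` with weights `w(r) = ∏ᵢ k^{(rᵢ)} / rᵢ!`. Applying `∑ⱼ ∂ⱼ`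
to the monomial of exponent `r` gives, for each `j`, the factor `-(k + rⱼ)` and the exponent
`r + eⱼ`. Since `(k + rⱼ) w(r) = (rⱼ + 1) w(r + eⱼ)`, the monomial of exponent `s`, `|s| = n + 1`,
collects `∑ⱼ sⱼ = n + 1` copies of `w(s)`, which is the factor `-(n + 1)` of the next step.
-/

open Filter Topology
open scoped Nat

section

variable {m : ℕ}

theorem sumPartialDeriv_eq_fderiv_one (f : (Fin m → ℝ) → ℝ) (x : Fin m → ℝ) :
    sumPartialDeriv m f x = fderiv ℝ f x 1 := by
  rw [sumPartialDeriv, ← map_sum, univ_sum_single (fun _ : Fin m => (1 : ℝ)), Pi.one_def]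

theorem Filter.EventuallyEq.sumPartialDeriv_eq {f g : (Fin m → ℝ) → ℝ} {x : Fin m → ℝ}
    (h : f =ᶠ[𝓝 x] g) : sumPartialDeriv m f x = sumPartialDeriv m g x := by
  rw [sumPartialDeriv_eq_fderiv_one, sumPartialDeriv_eq_fderiv_one, h.fderiv_eq]

theorem HasFDerivAt.sumPartialDeriv_eq {f : (Fin m → ℝ) → ℝ} {f' : (Fin m → ℝ) →L[ℝ] ℝ}
    {x : Fin m → ℝ} (h : HasFDerivAt f f' x) : sumPartialDeriv m f x = f' 1 := by
  rw [sumPartialDeriv_eq_fderiv_one, h.fderiv]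

theorem hasFDerivAt_prod_zpow (z : Fin m → ℤ) {x : Fin m → ℝ} (hx : ∀ i, x i ≠ 0) :
    HasFDerivAt (fun y => ∏ i, y i ^ z i)
      (∑ j, (z j * ∏ i, x i ^ (z - Pi.single j 1 : Fin m → ℤ) i) •
        (ContinuousLinearMap.proj j : (Fin m → ℝ) →L[ℝ] ℝ)) x := by
  have hcoord (i : Fin m) : HasFDerivAt (fun y : Fin m → ℝ => y i ^ z i)
      ((z i * x i ^ (z i - 1)) • (ContinuousLinearMap.proj i : (Fin m → ℝ) →L[ℝ] ℝ)) x :=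
    (hasDerivAt_zpow (z i) (x i) (Or.inl (hx i))).comp_hasFDerivAt
      (f := fun y : Fin m → ℝ => y i) x (hasFDerivAt_apply i x)
  refine (HasFDerivAt.finsetProd (u := univ) fun i _ => hcoord i).congr_fderiv
    (sum_congr rfl fun j _ => ?_)
  rw [smul_smul, ← mul_prod_erase univ _ (mem_univ j)]
  congr 1
  simp only [Pi.sub_apply, Pi.single_eq_same]
  have hrest : ∏ i ∈ univ.erase j, x i ^ (z i - Pi.single (M := fun _ => ℤ) j 1 i) =
      ∏ i ∈ univ.erase j, x i ^ z i :=
    prod_congr rfl fun i hi => by rw [Pi.single_eq_of_ne (ne_of_mem_erase hi), sub_zero]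
  rw [hrest]
  ring

theorem Finset.Nat.sum_antidiagonalTuple_add_single {M : Type*} [AddCommMonoid M] (n : ℕ)
    (j : Fin m) (f : (Fin m → ℕ) → M) :
    ∑ r ∈ Nat.antidiagonalTuple m n, f (r + Pi.single j 1) =
      ∑ s ∈ Nat.antidiagonalTuple m (n + 1) with s j ≠ 0, f s := by
  have single_le {s : Fin m → ℕ} (hs : s j ≠ 0) : Pi.single j 1 ≤ s := fun i => by
    rcases eq_or_ne i j with rfl | hij
    · simpa [Nat.one_le_iff_ne_zero] using hs
    · simp [hij]
  refine sum_nbij' (· + Pi.single j 1) (· - Pi.single j 1) ?_ ?_ ?_ ?_ fun _ _ => rfl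
  · intro r hr
    simp only [mem_filter, Nat.mem_antidiagonalTuple] at hr ⊢
    simp [sum_add_distrib, hr]
  · intro s hs
    simp only [mem_filter, Nat.mem_antidiagonalTuple] at hs ⊢
    have := congrArg (∑ i, · i) (tsub_add_cancel_of_le (single_le hs.2))
    simp only [Pi.add_apply, sum_add_distrib, Fintype.sum_pi_single', hs.1] at this
    omega
  · intro r _
    exact add_tsub_cancel_right r _
  · intro s hs
    exact tsub_add_cancel_of_le (single_le (mem_filter.1 hs).2)

noncomputable def ascFactorialWeight (k : ℕ) (r : Fin m → ℕ) : ℝ :=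
  ∏ i, (k.ascFactorial (r i) : ℝ) / (r i)!

theorem natCast_add_mul_ascFactorial_div_factorial (k n : ℕ) :
    ((k : ℝ) + n) * (k.ascFactorial n / n !) =
      (n + 1) * (k.ascFactorial (n + 1) / (n + 1)!) := by
  rw [Nat.ascFactorial_succ, Nat.factorial_succ]
  push_cast
  field_simp

theorem natCast_add_mul_ascFactorialWeight (k : ℕ) (r : Fin m → ℕ) (j : Fin m) :
    ((k : ℝ) + r j) * ascFactorialWeight k r =
      (r + Pi.single j 1 : Fin m → ℕ) j * ascFactorialWeight k (r + Pi.single j 1) := by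
  rw [ascFactorialWeight, ascFactorialWeight, ← mul_prod_erase univ _ (mem_univ j),
    ← mul_prod_erase univ _ (mem_univ j), ← mul_assoc, ← mul_assoc]
  simp only [Pi.add_apply, Pi.single_eq_same]
  rw [natCast_add_mul_ascFactorial_div_factorial]
  push_cast
  congr 1
  refine prod_congr rfl fun i hi => ?_
  rw [Pi.single_eq_of_ne (ne_of_mem_erase hi), add_zero]

theorem sum_natCast_add_mul_ascFactorialWeight_mul (k n : ℕ) (f : (Fin m → ℕ) → ℝ) :
    ∑ r ∈ Nat.antidiagonalTuple m n, ∑ j, ((k : ℝ) + r j) * ascFactorialWeight k r *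
        f (r + Pi.single j 1) =
      (n + 1) * ∑ s ∈ Nat.antidiagonalTuple m (n + 1), ascFactorialWeight k s * f s := by
  calc _ = ∑ j, ∑ r ∈ Nat.antidiagonalTuple m n, ((r + Pi.single j 1 : Fin m → ℕ) j : ℝ) *
          ascFactorialWeight k (r + Pi.single j 1) * f (r + Pi.single j 1) := by
        rw [sum_comm]
        simp only [natCast_add_mul_ascFactorialWeight]
    _ = ∑ j, ∑ s ∈ Nat.antidiagonalTuple m (n + 1) with s j ≠ 0,
          (s j : ℝ) * ascFactorialWeight k s * f s :=
        sum_congr rfl fun j _ => Nat.sum_antidiagonalTuple_add_single n j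
          fun s => (s j : ℝ) * ascFactorialWeight k s * f s
    _ = ∑ j, ∑ s ∈ Nat.antidiagonalTuple m (n + 1),
          (s j : ℝ) * ascFactorialWeight k s * f s := by
        refine sum_congr rfl fun j _ => sum_filter_of_ne fun s _ hs h0 => hs ?_
        simp [h0]
    _ = ∑ s ∈ Nat.antidiagonalTuple m (n + 1),
          (∑ j, (s j : ℝ)) * (ascFactorialWeight k s * f s) := by
        rw [sum_comm]
        simp only [sum_mul, mul_assoc]
    _ = _ := by
        rw [mul_sum]
        refine sum_congr rfl fun s hs => ?_
        rw [← Nat.cast_sum, Nat.mem_antidiagonalTuple.1 hs]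
        push_cast
        rfl

noncomputable def ascFactorialLaurent (k n : ℕ) (y : Fin m → ℝ) : ℝ :=
  ∑ r ∈ Nat.antidiagonalTuple m n, ascFactorialWeight k r * ∏ i, y i ^ (-((k + r i : ℕ) : ℤ))

theorem neg_natCast_add_sub_single (k : ℕ) (r : Fin m → ℕ) (j : Fin m) :
    (fun i => -((k + r i : ℕ) : ℤ)) - Pi.single j 1 =
      fun i => -((k + (r + Pi.single j 1 : Fin m → ℕ) i : ℕ) : ℤ) := by
  ext i
  rcases eq_or_ne i j with rfl | hij <;> simp [*]
  ring

theorem sumPartialDeriv_const_mul_ascFactorialLaurent (c : ℝ) (k n : ℕ) {x : Fin m → ℝ}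
    (hx : ∀ i, x i ≠ 0) :
    sumPartialDeriv m (fun y => c * ascFactorialLaurent k n y) x =
      -(c * (n + 1)) * ascFactorialLaurent k (n + 1) x := by
  have hderiv := (HasFDerivAt.fun_sum (u := Nat.antidiagonalTuple m n) fun r _ =>
    (hasFDerivAt_prod_zpow (fun i => -((k + r i : ℕ) : ℤ)) hx).const_mul
      (ascFactorialWeight k r)).const_mul c
  rw [HasFDerivAt.sumPartialDeriv_eq (f := fun y => c * ascFactorialLaurent k n y) hderiv]
  simp only [_root_.smul_apply, _root_.sum_apply, ContinuousLinearMap.proj_apply, Pi.one_apply,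
    smul_eq_mul, mul_one, neg_natCast_add_sub_single]
  rw [ascFactorialLaurent, neg_mul, mul_assoc, ← sum_natCast_add_mul_ascFactorialWeight_mul,
    ← mul_neg, ← sum_neg_distrib]
  refine congrArg _ (sum_congr rfl fun r _ => ?_)
  rw [mul_sum, ← sum_neg_distrib]
  refine sum_congr rfl fun j _ => ?_
  push_cast
  ring

theorem sumPartialDeriv_iterate_zpow_neg (k ℓ : ℕ) {x : Fin m → ℝ} (hx : ∀ i, x i ≠ 0) :
    (sumPartialDeriv m)^[ℓ] (fun y => (∏ j, y j) ^ (-(k : ℤ))) x =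
      (-1) ^ ℓ * ℓ ! * ascFactorialLaurent k ℓ x := by
  induction ℓ generalizing x with
  | zero =>
    simp [ascFactorialLaurent, ascFactorialWeight, Nat.antidiagonalTuple_zero_right,
      prod_inv_distrib, prod_pow]
  | succ n ih =>
    have hnear : ∀ᶠ y in 𝓝 x, ∀ i, y i ≠ 0 :=
      eventually_all.2 fun i => (continuous_apply i).continuousAt.eventually_ne (hx i)
    rw [Function.iterate_succ_apply',
      EventuallyEq.sumPartialDeriv_eq (hnear.mono fun y hy => ih hy),
      sumPartialDeriv_const_mul_ascFactorialLaurent _ _ _ hx]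
    push_cast [Nat.factorial_succ, pow_succ]
    ring

end

theorem sumPartialDeriv_iterate_prod_zpow_general (m k : ℕ) (ℓ : ℕ)
    (x : Fin m → ℝ) (hx : ∀ j, x j ≠ 0) :
    ((∏ j, x j) ^ ((k : ℤ) + ℓ) *
        (sumPartialDeriv m)^[ℓ] (fun y : Fin m → ℝ => (∏ j, y j) ^ (-(k : ℤ))) x) /
        (∏ j, x j) ^ (ℓ : ℤ) =
      (-1) ^ ℓ * (Nat.factorial ℓ : ℝ) *
        ∑ r ∈ Finset.Nat.antidiagonalTuple m ℓ,
          ∏ j, ((k.ascFactorial (r j) : ℝ) / (Nat.factorial (r j) : ℝ)) *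
            x j ^ (-(r j : ℤ)) := by
  have hprod : ∏ j, x j ≠ 0 := prod_ne_zero_iff.2 fun j _ => hx j
  have hmonomial (r : Fin m → ℕ) :
      (∏ j, x j) ^ (k : ℤ) * ∏ i, x i ^ (-((k + r i : ℕ) : ℤ)) = ∏ i, x i ^ (-(r i : ℤ)) := by
    rw [← prod_zpow, ← prod_mul_distrib]
    refine prod_congr rfl fun i _ => ?_
    rw [← zpow_add₀ (hx i)]
    push_cast
    ring_nf
  rw [sumPartialDeriv_iterate_zpow_neg k ℓ hx, zpow_add₀ hprod, mul_right_comm, mul_div_assoc,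
    div_self (zpow_ne_zero _ hprod), mul_one, mul_left_comm, ascFactorialLaurent, mul_sum]
  refine congrArg _ (sum_congr rfl fun r _ => ?_)
  rw [mul_left_comm, hmonomial, prod_mul_distrib, ascFactorialWeight]

/-- With `P_{m,k,ℓ}(x) = (x₁⋯x_m)^{k+ℓ} (∂_{x₁}+⋯+∂_{x_m})^ℓ (x₁⋯x_m)^{−k}`, on the domain
where all `xⱼ ≠ 0` we have
`P_{m,k,ℓ}(x)/(x₁⋯x_m)^ℓ = (−1)^ℓ ℓ! Σ_{r ∈ ℕ^m, Σrⱼ=ℓ} ∏ⱼ (k^{(rⱼ)}/rⱼ!) xⱼ^{−rⱼ}`,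
where `k^{(n)} = k(k+1)⋯(k+n−1)` is the rising factorial. -/
theorem sumPartialDeriv_iterate_prod_zpow (m k : ℕ) (hm : 0 < m) (hk : 0 < k) (ℓ : ℕ)
    (x : Fin m → ℝ) (hx : ∀ j, x j ≠ 0) :
    ((∏ j, x j) ^ ((k : ℤ) + ℓ) *
        (sumPartialDeriv m)^[ℓ] (fun y : Fin m → ℝ => (∏ j, y j) ^ (-(k : ℤ))) x) /
        (∏ j, x j) ^ (ℓ : ℤ) =
      (-1) ^ ℓ * (Nat.factorial ℓ : ℝ) *
        ∑ r ∈ Finset.Nat.antidiagonalTuple m ℓ,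
          ∏ j, ((k.ascFactorial (r j) : ℝ) / (Nat.factorial (r j) : ℝ)) *
            x j ^ (-(r j : ℤ)) :=
  sumPartialDeriv_iterate_prod_zpow_general m k ℓ x hx
end

section
/- Let β ∈ ℂ be a root of a monic cubic polynomial over ℚ generating a cubic field, and let f(X,Y) = AX³ + BX²Y + CXY² + DY³ be an integral binary cubic form with A ≠ 0 and f(β, 1) = 0. Then O_f := ℤ + ℤ·(Aβ) + ℤ·(Aβ² + Bβ + C) is a subring of ℚ(β) which is a free ℤ-module of rank 3 (i.e., an order in the cubic field ℚ(β)). -/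
open Polynomial

private def OfSubring (β : ℂ) (A B C D : ℤ)
    (hroot : (A : ℂ) * β ^ 3 + B * β ^ 2 + C * β + D = 0) : Subring ℂ := {
    carrier := {x : ℂ | ∃ a b c : ℤ, x = (a : ℂ) + (b : ℂ) * ((A : ℂ) * β) +
        (c : ℂ) * ((A : ℂ) * β ^ 2 + (B : ℂ) * β + (C : ℂ))}
    one_mem' := ⟨1, 0, 0, by push_cast; ring⟩
    zero_mem' := ⟨0, 0, 0, by push_cast; ring⟩
    add_mem' := by
      rintro x y ⟨a, b, c, hx⟩ ⟨a', b', c', hy⟩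
      exact ⟨a + a', b + b', c + c', by subst hx hy; push_cast; ring⟩
    neg_mem' := by
      rintro x ⟨a, b, c, hx⟩
      exact ⟨-a, -b, -c, by subst hx; push_cast; ring⟩
    mul_mem' := by
      rintro x y ⟨a, b, c, hx⟩ ⟨a', b', c', hy⟩
      refine ⟨a * a' - A * D * (b * c' + c * b') - A * C * (b * b') - B * D * (c * c'),
        a * b' + a' * b - B * (b * b') - D * (c * c'),
        a * c' + a' * c + A * (b * b') + C * (c * c'), ?_⟩
      subst hx hy
      push_cast
      linear_combination (((b : ℂ) * c' + (c : ℂ) * b') * A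
        + (c : ℂ) * c' * ((A : ℂ) * β + B)) * hroot }

/-- Let `β ∈ ℂ` be a root of a monic irreducible cubic polynomial over `ℚ` (so that `ℚ(β)`
is a cubic field), and let `f(X,Y) = AX³ + BX²Y + CXY² + DY³` be an integral binary cubic
form with `A ≠ 0` and `f(β, 1) = 0`.  Then
`O_f = ℤ + ℤ·(Aβ) + ℤ·(Aβ² + Bβ + C)` is a subring of `ℂ` (contained in `ℚ(β)`) which is a
free `ℤ`-module of rank 3, i.e. an order in the cubic field `ℚ(β)`. -/
theorem cubicForm_order (β : ℂ)
    (hβ : ∃ p : Polynomial ℚ, p.Monic ∧ p.degree = 3 ∧ Irreducible p ∧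
      Polynomial.aeval β p = 0)
    (A B C D : ℤ) (hA : A ≠ 0)
    (hroot : (A : ℂ) * β ^ 3 + B * β ^ 2 + C * β + D = 0) :
    ∃ S : Subring ℂ,
      (S : Set ℂ) =
        {x : ℂ | ∃ a b c : ℤ, x = (a : ℂ) + (b : ℂ) * ((A : ℂ) * β) +
          (c : ℂ) * ((A : ℂ) * β ^ 2 + (B : ℂ) * β + (C : ℂ))} ∧
      Nonempty (Module.Basis (Fin 3) ℤ S) := by
  obtain ⟨p, hmonic, hdeg, hirr, haev⟩ := hβ
  have hmin : minpoly ℚ β = p := (minpoly.eq_of_irreducible_of_monic hirr haev hmonic).symm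
  -- 1, β, β² are linearly independent over ℚ
  have hindep : ∀ x y z : ℚ, (x : ℂ) + y * β + z * β ^ 2 = 0 → x = 0 ∧ y = 0 ∧ z = 0 := by
    intro x y z h
    by_contra hc
    set q : ℚ[X] := Polynomial.C z * X ^ 2 + Polynomial.C y * X + Polynomial.C x with hq
    have hq0 : q ≠ 0 := by
      intro h0
      apply hc
      refine ⟨?_, ?_, ?_⟩
      · have := congrArg (fun r => Polynomial.coeff r 0) h0
        simpa [hq, coeff_X, coeff_C] using this
      · have := congrArg (fun r => Polynomial.coeff r 1) h0
        simpa [hq, coeff_X, coeff_C] using this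
      · have := congrArg (fun r => Polynomial.coeff r 2) h0
        simpa [hq, coeff_X, coeff_C] using this
    have hqa : Polynomial.aeval β q = 0 := by
      simp only [hq, map_add, map_mul, map_pow, aeval_C, aeval_X, eq_ratCast]
      linear_combination h
    have hle := minpoly.degree_le_of_ne_zero ℚ β hq0 hqa
    rw [hmin, hdeg] at hle
    have h2 : q.degree ≤ 2 := degree_quadratic_le
    have : (3 : WithBot ℕ) ≤ 2 := le_trans hle h2
    norm_num at this
  refine ⟨OfSubring β A B C D hroot, rfl, ?_⟩
  -- Build a ℤ-basis
  have h1 : (1 : ℂ) ∈ OfSubring β A B C D hroot := ⟨1, 0, 0, by push_cast; ring⟩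
  have hθ : ((A : ℂ) * β) ∈ OfSubring β A B C D hroot := ⟨0, 1, 0, by push_cast; ring⟩
  have hξ : ((A : ℂ) * β ^ 2 + (B : ℂ) * β + (C : ℂ)) ∈ OfSubring β A B C D hroot := ⟨0, 0, 1, by push_cast; ring⟩
  let v : Fin 3 → OfSubring β A B C D hroot := ![⟨1, h1⟩, ⟨(A : ℂ) * β, hθ⟩, ⟨(A : ℂ) * β ^ 2 + (B : ℂ) * β + (C : ℂ), hξ⟩]
  have hAQ : (A : ℚ) ≠ 0 := Int.cast_ne_zero.mpr hA
  have hli : LinearIndependent ℤ v := by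
    rw [Fintype.linearIndependent_iff]
    intro g hg
    have hg' : (g 0 : ℂ) + (g 1 : ℂ) * ((A : ℂ) * β) +
        (g 2 : ℂ) * ((A : ℂ) * β ^ 2 + (B : ℂ) * β + (C : ℂ)) = 0 := by
      have := congrArg (fun s : OfSubring β A B C D hroot => (s : ℂ)) hg
      simpa [Fin.sum_univ_three, v, zsmul_eq_mul] using this
    have h3 := hindep ((g 0 : ℚ) + C * g 2) ((A : ℚ) * g 1 + B * g 2) ((A : ℚ) * g 2)
      (by push_cast; linear_combination hg')
    have hg2 : g 2 = 0 := by
      rcases mul_eq_zero.mp h3.2.2 with h' | h'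
      · exact absurd h' hAQ
      · exact_mod_cast h'
    have hg1 : g 1 = 0 := by
      have := h3.2.1
      rw [hg2] at this
      push_cast at this
      simp [hAQ] at this
      exact_mod_cast this
    have hg0 : g 0 = 0 := by
      have := h3.1
      rw [hg2] at this
      push_cast at this
      simp at this
      exact_mod_cast this
    intro i
    fin_cases i <;> assumption
  have hsp : ⊤ ≤ Submodule.span ℤ (Set.range v) := by
    rintro ⟨x, hx⟩ -
    obtain ⟨a, b, c, hxe⟩ := hx
    have hxeq : (⟨x, ⟨a, b, c, hxe⟩⟩ : OfSubring β A B C D hroot) = a • v 0 + b • v 1 + c • v 2 := by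
      apply Subtype.ext
      show x = _
      simp only [v, Matrix.cons_val_zero, Matrix.cons_val_one, Matrix.head_cons,
        Matrix.cons_val_two, Matrix.tail_cons]
      push_cast [hxe, zsmul_eq_mul]
      ring
    rw [hxeq]
    refine add_mem (add_mem ?_ ?_) ?_ <;>
      exact Submodule.smul_mem _ _ (Submodule.subset_span ⟨_, rfl⟩)
  exact ⟨Module.Basis.mk hli hsp⟩
end

section
/- Every SL₂(ℤ)-equivalence class of integral binary cubic forms f with positive discriminant Δ(f) contains a representative f′ with P(f′) := B′² − 3A′C′ ≤ √(Δ(f)). (Reduction of binary cubic forms via the Hessian.) -/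
/-- The discriminant of an integral binary cubic form `AX³ + BX²Y + CXY² + DY³`. -/
def cubicDisc (A B C D : ℤ) : ℤ :=
  18 * A * B * C * D + B ^ 2 * C ^ 2 - 4 * A * C ^ 3 - 4 * B ^ 3 * D - 27 * A ^ 2 * D ^ 2

/-- The coefficients `(A', B', C', D')` of the binary cubic form
`f(aX+bY, cX+dY)` obtained from `f = (A, B, C, D)` by substitution along
`γ = [[a,b],[c,d]] ∈ SL₂(ℤ)`. -/
def cubicAct (γ : Matrix.SpecialLinearGroup (Fin 2) ℤ) (A B C D : ℤ) : ℤ × ℤ × ℤ × ℤ :=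
  let a := (γ : Matrix (Fin 2) (Fin 2) ℤ) 0 0
  let b := (γ : Matrix (Fin 2) (Fin 2) ℤ) 0 1
  let c := (γ : Matrix (Fin 2) (Fin 2) ℤ) 1 0
  let d := (γ : Matrix (Fin 2) (Fin 2) ℤ) 1 1
  (A * a ^ 3 + B * a ^ 2 * c + C * a * c ^ 2 + D * c ^ 3,
   3 * A * a ^ 2 * b + B * (a ^ 2 * d + 2 * a * b * c) +
     C * (2 * a * c * d + b * c ^ 2) + 3 * D * c ^ 2 * d,
   3 * A * a * b ^ 2 + B * (2 * a * b * d + b ^ 2 * c) +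
     C * (a * d ^ 2 + 2 * b * c * d) + 3 * D * c * d ^ 2,
   A * b ^ 3 + B * b ^ 2 * d + C * b * d ^ 2 + D * d ^ 3)

/-- Reduction of positive definite integral binary quadratic forms:
a form of discriminant `-3Δ` represents, at a primitive vector, a positive
value `w` with `w² ≤ Δ`. -/
lemma quad_reduce (Δ : ℤ) (hΔ : 0 < Δ) :
    ∀ n : ℕ, ∀ P R S : ℤ, P ≤ (n : ℤ) → 0 < P → R ^ 2 - 4 * P * S = -3 * Δ →
      ∃ a c : ℤ, IsCoprime a c ∧ 0 < P * a ^ 2 + R * a * c + S * c ^ 2 ∧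
        (P * a ^ 2 + R * a * c + S * c ^ 2) ^ 2 ≤ Δ := by
  intro n
  induction n with
  | zero =>
    intro P R S hle hP _
    exfalso; omega
  | succ n ih =>
    intro P R S hle hP hdisc
    have h2P : 0 < 2 * P := by linarith
    set q : ℤ := (R + P) / (2 * P) with hq
    set R' : ℤ := R - 2 * P * q with hR'
    have hmod : R' = (R + P) % (2 * P) - P := by
      have := Int.mul_ediv_add_emod (R + P) (2 * P)
      rw [hR', hq]; linarith
    have hlb : -P ≤ R' := by
      have := Int.emod_nonneg (R + P) (ne_of_gt h2P)
      rw [hmod]; linarith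
    have hub : R' < P := by
      have := Int.emod_lt_of_pos (R + P) h2P
      rw [hmod]; linarith
    set S' : ℤ := P * q ^ 2 - R * q + S with hS'
    have hdisc' : R' ^ 2 - 4 * P * S' = -3 * Δ := by
      rw [hR', hS']; linear_combination hdisc
    have hS'pos : 0 < S' := by nlinarith [sq_nonneg R']
    by_cases hcase : S' < P
    · obtain ⟨a, c, hcop, hpos, hle2⟩ :=
        ih S' (-R') P (by omega) hS'pos (by linear_combination hdisc')
      have hval : P * (-c - q * a) ^ 2 + R * (-c - q * a) * a + S * a ^ 2 =
          S' * a ^ 2 + -R' * a * c + P * c ^ 2 := by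
        rw [hR', hS']; ring
      have hcop2 : IsCoprime (-c - q * a) a := by
        have := (hcop.symm.neg_left).add_mul_left_left (-q)
        rwa [show -c + a * -q = -c - q * a by ring] at this
      exact ⟨-c - q * a, a, hcop2, by rw [hval]; exact hpos, by rw [hval]; exact hle2⟩
    · push_neg at hcase
      refine ⟨1, 0, isCoprime_one_left, by nlinarith, ?_⟩
      have hPsq : 3 * P ^ 2 ≤ 3 * Δ := by nlinarith [sq_nonneg (R' + P), sq_nonneg (R' - P)]
      nlinarith

/-- Positivity of the Hessian leading coefficient when `Δ > 0`. -/
lemma hessian_pos (A B C D : ℤ) (h : 0 < cubicDisc A B C D) : 0 < B ^ 2 - 3 * A * C := by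
  have hΔ : 0 < 18 * A * B * C * D + B ^ 2 * C ^ 2 - 4 * A * C ^ 3 - 4 * B ^ 3 * D -
      27 * A ^ 2 * D ^ 2 := h
  -- find x₀ with f(x₀,1) ≠ 0
  have hex : ∃ x : ℤ, A * x ^ 3 + B * x ^ 2 + C * x + D ≠ 0 := by
    by_contra hc
    push_neg at hc
    have h0 := hc 0; have h1 := hc 1; have h2 := hc (-1); have h3 := hc 2
    have hA : A = 0 := by ring_nf at h0 h1 h2 h3; omega
    have hB : B = 0 := by ring_nf at h0 h1 h2 h3; omega
    have hC : C = 0 := by ring_nf at h0 h1 h2 h3; omega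
    have hD : D = 0 := by ring_nf at h0 h1 h2 h3; omega
    rw [hA, hB, hC, hD] at hΔ; norm_num at hΔ
  obtain ⟨x, hx⟩ := hex
  set f := A * x ^ 3 + B * x ^ 2 + C * x + D with hf
  set P := B ^ 2 - 3 * A * C with hP
  set R := B * C - 9 * A * D with hR
  set S := C ^ 2 - 3 * B * D with hS
  set Q := P * x ^ 2 + R * x + S with hQ
  set G := (3 * A * x ^ 2 + 2 * B * x + C) * (R * x + 2 * S) -
      (B * x ^ 2 + 2 * C * x + 3 * D) * (2 * P * x + R) with hG
  have syz : 4 * Q ^ 3 = G ^ 2 + 27 * (18 * A * B * C * D + B ^ 2 * C ^ 2 - 4 * A * C ^ 3 -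
      4 * B ^ 3 * D - 27 * A ^ 2 * D ^ 2) * f ^ 2 := by
    rw [hQ, hG, hf, hP, hR, hS]; ring
  have hf2 : 1 ≤ f ^ 2 := by
    rcases hx.lt_or_gt with h' | h' <;> nlinarith
  have hQ3 : 0 < Q ^ 3 := by nlinarith
  have hQpos : 0 < Q := by
    by_contra hQ0
    push_neg at hQ0
    nlinarith [sq_nonneg Q]
  -- 4 P Q = (2Px+R)² + 3Δ > 0
  have hkey : 4 * P * Q = (2 * P * x + R) ^ 2 + 3 * (18 * A * B * C * D + B ^ 2 * C ^ 2 -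
      4 * A * C ^ 3 - 4 * B ^ 3 * D - 27 * A ^ 2 * D ^ 2) := by
    rw [hQ, hP, hR, hS]; ring
  by_contra hP0
  push_neg at hP0
  nlinarith [sq_nonneg (2 * P * x + R)]

/-- Every `SL₂(ℤ)`-equivalence class of integral binary cubic forms with positive
discriminant contains a representative `f' = (A', B', C', D')` with
`P(f') = B'² − 3A'C' ≤ √(Δ(f))`. -/
theorem exists_reduced_cubic_rep (A B C D : ℤ) (h : 0 < cubicDisc A B C D) :
    ∃ γ : Matrix.SpecialLinearGroup (Fin 2) ℤ,
      ((cubicAct γ A B C D).2.1 ^ 2 -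
          3 * (cubicAct γ A B C D).1 * (cubicAct γ A B C D).2.2.1 : ℝ) ≤
        Real.sqrt (cubicDisc A B C D) := by
  set P := B ^ 2 - 3 * A * C with hPdef
  set R := B * C - 9 * A * D with hRdef
  set S := C ^ 2 - 3 * B * D with hSdef
  have hP : 0 < P := hessian_pos A B C D h
  have hΔ : 0 < cubicDisc A B C D := h
  have hdisc : R ^ 2 - 4 * P * S = -3 * cubicDisc A B C D := by
    rw [hPdef, hRdef, hSdef, cubicDisc]; ring
  obtain ⟨a, c, hcop, hpos, hsq⟩ :=
    quad_reduce (cubicDisc A B C D) hΔ P.toNat P R S (by omega) hP hdisc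
  obtain ⟨u, v, huv⟩ := hcop
  set w : ℤ := P * a ^ 2 + R * a * c + S * c ^ 2 with hw
  have hdet : Matrix.det !![a, -v; c, u] = 1 := by
    rw [Matrix.det_fin_two_of]; linarith
  refine ⟨⟨!![a, -v; c, u], hdet⟩, ?_⟩
  have key : (cubicAct ⟨!![a, -v; c, u], hdet⟩ A B C D).2.1 ^ 2 -
      3 * (cubicAct ⟨!![a, -v; c, u], hdet⟩ A B C D).1 *
      (cubicAct ⟨!![a, -v; c, u], hdet⟩ A B C D).2.2.1 = w := by
    simp only [cubicAct, Matrix.cons_val', Matrix.cons_val_zero, Matrix.cons_val_one, Matrix.head_cons,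
      Matrix.empty_val', Matrix.cons_val_fin_one, Matrix.head_fin_const, Matrix.of_apply]
    rw [hw, hPdef, hRdef, hSdef]
    linear_combination (u * a + v * c + 1) *
      ((B ^ 2 - 3 * A * C) * a ^ 2 + (B * C - 9 * A * D) * a * c +
        (C ^ 2 - 3 * B * D) * c ^ 2) * huv
  have keyR : ((cubicAct ⟨!![a, -v; c, u], hdet⟩ A B C D).2.1 ^ 2 -
      3 * (cubicAct ⟨!![a, -v; c, u], hdet⟩ A B C D).1 *
      (cubicAct ⟨!![a, -v; c, u], hdet⟩ A B C D).2.2.1 : ℝ) = (w : ℝ) := by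
    exact_mod_cast congrArg (Int.cast : ℤ → ℝ) key
  rw [keyR]
  have h1 : (0 : ℝ) ≤ (w : ℝ) := by exact_mod_cast hpos.le
  have h2 : ((w : ℝ)) ^ 2 ≤ (cubicDisc A B C D : ℝ) := by exact_mod_cast hsq
  exact (Real.le_sqrt h1 (by exact_mod_cast hΔ.le)).mpr h2
end
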